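/- The safe zone A := {(s₀,i₀) ∈ T : i^{s₀,i₀,0}(t) ≤ i_M for all t ∈ (0,∞)} (trajectories with zero control) equals the set {(s,i) ∈ T : 0 < i ≤ Φ₀(s)}, where Φ₀(s) = i_M for 0 < s < γ/β and Φ₀(s) = γ/β + i_M − s + (γ/β)·(log s − log(γ/β)) for s ≥ γ/β. -/

import Mathlib

open MeasureTheory Filter Set intervalIntegral
open scoped ENNReal

noncomputable section

/-- A control: a measurable (essentially bounded) function with values in `[0, umax]`. -/
def IsControl (umax : ℝ) (u : ℝ → ℝ) : Prop :=
  Measurable u ∧ ∀ t : ℝ, u t ∈ Set.Icc (0 : ℝ) umax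

/-- Solution of the controlled SIR system on `[0,∞)`, in integral (i.e. locally absolutely
continuous) form: `s' = -(β-u)·s·i`, `i' = (β-u)·s·i - γ·i` a.e., `s 0 = s₀`, `i 0 = i₀`. -/
def SIRSol (β γ : ℝ) (u s i : ℝ → ℝ) (s₀ i₀ : ℝ) : Prop :=
  Continuous s ∧ Continuous i ∧
  (∀ t : ℝ, 0 ≤ t → s t = s₀ + ∫ τ in (0:ℝ)..t, -((β - u τ) * s τ * i τ)) ∧
  (∀ t : ℝ, 0 ≤ t → i t = i₀ + ∫ τ in (0:ℝ)..t, ((β - u τ) * s τ * i τ - γ * i τ))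

/-- Solution of the controlled SIR system on `[0,T]`, in integral form. -/
def SIRSolOn (β γ T : ℝ) (u s i : ℝ → ℝ) (s₀ i₀ : ℝ) : Prop :=
  ContinuousOn s (Set.Icc 0 T) ∧ ContinuousOn i (Set.Icc 0 T) ∧
  (∀ t ∈ Set.Icc (0:ℝ) T, s t = s₀ + ∫ τ in (0:ℝ)..t, -((β - u τ) * s τ * i τ)) ∧
  (∀ t ∈ Set.Icc (0:ℝ) T, i t = i₀ + ∫ τ in (0:ℝ)..t, ((β - u τ) * s τ * i τ - γ * i τ))

/-- The triangle `T = {(s,i) ∈ (0,1]² : s + i ≤ 1}`. -/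
def Triangle : Set (ℝ × ℝ) :=
  {p | 0 < p.1 ∧ p.1 ≤ 1 ∧ 0 < p.2 ∧ p.2 ≤ 1 ∧ p.1 + p.2 ≤ 1}

/-- The curve `Φ_max`. -/
def PhiMax (β γ umax iM : ℝ) (x : ℝ) : ℝ :=
  if x < γ / (β - umax) then iM
  else γ / (β - umax) + iM - x + (γ / (β - umax)) * (Real.log x - Real.log (γ / (β - umax)))

/-- The curve `Φ₀`. -/
def Phi0 (β γ iM : ℝ) (x : ℝ) : ℝ :=
  if x < γ / β then iM
  else γ / β + iM - x + (γ / β) * (Real.log x - Real.log (γ / β))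

/-- The ICU (state) constraint `i(t) ≤ i_M` for all `t ≥ 0`. -/
def Admissible (iM : ℝ) (i : ℝ → ℝ) : Prop := ∀ t : ℝ, 0 ≤ t → i t ≤ iM

/-- Infinite-horizon cost `J^∞(u) = ∫₀^∞ (λ₁ u + λ₂ i) dt`, with values in `[0,∞]`. -/
def Cost (l1 l2 : ℝ) (u i : ℝ → ℝ) : ℝ≥0∞ :=
  ∫⁻ t in Set.Ioi (0:ℝ), ENNReal.ofReal (l1 * u t + l2 * i t)

/-- Finite-horizon cost `J^T(u) = ∫₀^T (λ₁ u + λ₂ i) dt`. -/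
def CostT (l1 l2 T : ℝ) (u i : ℝ → ℝ) : ℝ≥0∞ :=
  ∫⁻ t in Set.Ioc (0:ℝ) T, ENNReal.ofReal (l1 * u t + l2 * i t)

/-- The safe (no-effort) zone `A`. -/
def SafeZone (β γ iM : ℝ) : Set (ℝ × ℝ) :=
  {p | p ∈ Triangle ∧ ∃ s i : ℝ → ℝ,
    SIRSol β γ (fun _ => 0) s i p.1 p.2 ∧ Admissible iM i}

/-- The viable (feasible) set `B`. -/
def ViableSet (β γ umax iM : ℝ) : Set (ℝ × ℝ) :=
  {p | p ∈ Triangle ∧ ∃ u s i : ℝ → ℝ, IsControl umax u ∧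
    SIRSol β γ u s i p.1 p.2 ∧ Admissible iM i}

/-- Weak* convergence in `L^∞(0,∞)`: testing against every `L¹` function. -/
def WeakStarLim (un : ℕ → ℝ → ℝ) (u : ℝ → ℝ) : Prop :=
  ∀ g : ℝ → ℝ, MeasureTheory.IntegrableOn g (Set.Ioi 0) →
    Filter.Tendsto (fun n => ∫ t in Set.Ioi (0:ℝ), un n t * g t) Filter.atTop
      (nhds (∫ t in Set.Ioi (0:ℝ), u t * g t))

/-!
Along a zero-control trajectory the quantity `s + i - (γ/β) log s` is conserved, so
`i = orbit (γ/β) s₀ i₀ s`, while `s` decreases. As a function of `s` the orbit is concave with its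
maximum at `s = γ/β`, so the largest value of `i` along the trajectory is the orbit at
`min (γ/β) s₀`, and `i₀ ≤ Φ₀(s₀)` says exactly that this value is at most `i_M`. For `A ⊆ …` one
checks that `s` does reach `γ/β` when `s₀ ≥ γ/β`: as long as `s > γ/β`, `i ≥ i₀` and `s` drops at
rate at least `γ i₀`. For `… ⊆ A` a trajectory has to be constructed: it solves the scalar equation
`s' = -β s · orbit s`, obtained by inverting the time map `σ ↦ ∫ dσ / (β σ orbit σ)`, which
diverges at the zero of the orbit because the orbit vanishes there only linearly.
-/

open Real

lemma StrictMonoOn.exists_hasDerivAt_inverse {g g' : ℝ → ℝ} {s : Set ℝ} (hs : IsOpen s)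
    (hmono : StrictMonoOn g s) (hsurj : SurjOn g s univ)
    (hg : ∀ x ∈ s, HasDerivAt g (g' x) x) (hg' : ∀ x ∈ s, g' x ≠ 0) :
    ∃ y : ℝ → ℝ, StrictMono y ∧ (∀ t, y t ∈ s) ∧ (∀ t, g (y t) = t) ∧
      ∀ t, HasDerivAt y (g' (y t))⁻¹ t := by
  choose y hys hgy using fun t => hsurj (mem_univ t)
  have hy_mono : StrictMono y := fun t₁ t₂ ht => by
    rwa [← hmono.lt_iff_lt (hys t₁) (hys t₂), hgy, hgy]
  have hrange : range y = s :=
    (range_subset_iff.2 hys).antisymm fun x hx => ⟨g x, hmono.injOn (hys _) hx (hgy _)⟩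
  have hcont : Continuous y := continuous_iff_continuousAt.2 fun t =>
    (hy_mono.strictMonoOn univ).continuousAt_of_image_mem_nhds univ_mem
      (by rw [image_univ, hrange]; exact hs.mem_nhds (hys t))
  exact ⟨y, hy_mono, hys, hgy, fun t => HasDerivAt.of_local_left_inverse hcont.continuousAt
    (hg _ (hys t)) (hg' _ (hys t)) (Eventually.of_forall hgy)⟩

-- the time the solution of `x' = f x` starting from `x₀` needs to reach `σ`
def timeMap (f : ℝ → ℝ) (x₀ σ : ℝ) : ℝ := ∫ r in x₀..σ, (f r)⁻¹

section TimeMap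

variable {f : ℝ → ℝ} {a M x₀ : ℝ}

lemma hasDerivAt_timeMap (hf : ContinuousOn f (Ioi a)) (hpos : ∀ x ∈ Ioi a, 0 < f x)
    (hx₀ : a < x₀) {σ : ℝ} (hσ : a < σ) : HasDerivAt (timeMap f x₀) (f σ)⁻¹ σ := by
  have hinv : ContinuousOn (fun r => (f r)⁻¹) (Ioi a) := hf.inv₀ fun r hr => (hpos r hr).ne'
  refine intervalIntegral.integral_hasDerivAt_right (hinv.mono ?_).intervalIntegrable
    (hinv.stronglyMeasurableAtFilter isOpen_Ioi σ hσ) (hinv.continuousAt (Ioi_mem_nhds hσ))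
  exact fun r hr => (lt_inf_iff.2 ⟨hx₀, hσ⟩).trans_le hr.1

lemma continuousOn_timeMap (hf : ContinuousOn f (Ioi a)) (hpos : ∀ x ∈ Ioi a, 0 < f x)
    (hx₀ : a < x₀) : ContinuousOn (timeMap f x₀) (Ioi a) :=
  fun _ hσ => (hasDerivAt_timeMap hf hpos hx₀ hσ).continuousAt.continuousWithinAt

lemma strictMonoOn_timeMap (hf : ContinuousOn f (Ioi a)) (hpos : ∀ x ∈ Ioi a, 0 < f x)
    (hx₀ : a < x₀) : StrictMonoOn (timeMap f x₀) (Ioi a) := by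
  refine strictMonoOn_of_hasDerivWithinAt_pos (f' := fun σ => (f σ)⁻¹) (convex_Ioi a)
    (continuousOn_timeMap hf hpos hx₀) (fun σ hσ => ?_) fun σ hσ => ?_ <;> rw [interior_Ioi] at hσ
  · exact (hasDerivAt_timeMap hf hpos hx₀ hσ).hasDerivWithinAt
  · exact inv_pos.2 (hpos σ hσ)

lemma monotoneOn_timeMap_sub_log (hf : ContinuousOn f (Ioi a)) (hpos : ∀ x ∈ Ioi a, 0 < f x)
    (hle : ∀ x ∈ Ioi a, f x ≤ M * (x - a)) (hx₀ : a < x₀) :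
    MonotoneOn (fun σ => timeMap f x₀ σ - M⁻¹ * log (σ - a)) (Ioi a) := by
  have hderiv : ∀ σ ∈ Ioi a, HasDerivAt (fun σ => timeMap f x₀ σ - M⁻¹ * log (σ - a))
      ((f σ)⁻¹ - M⁻¹ * (σ - a)⁻¹) σ := fun σ hσ =>
    (hasDerivAt_timeMap hf hpos hx₀ hσ).sub
      (((((hasDerivAt_id σ).sub_const a).log (sub_pos.2 hσ).ne').const_mul M⁻¹).congr_deriv
        (by simp [div_eq_mul_inv]))
  refine monotoneOn_of_hasDerivWithinAt_nonneg (f' := fun σ => (f σ)⁻¹ - M⁻¹ * (σ - a)⁻¹)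
    (convex_Ioi a) (fun σ hσ => (hderiv σ hσ).continuousAt.continuousWithinAt)
    (fun σ hσ => ?_) fun σ hσ => ?_
    <;> rw [interior_Ioi] at hσ
  · exact (hderiv σ hσ).hasDerivWithinAt
  · rw [sub_nonneg, ← mul_inv]
    exact inv_anti₀ (hpos σ hσ) (hle σ hσ)

lemma surjOn_timeMap (hf : ContinuousOn f (Ioi a)) (hpos : ∀ x ∈ Ioi a, 0 < f x)
    (hle : ∀ x ∈ Ioi a, f x ≤ M * (x - a)) (hx₀ : a < x₀) :
    SurjOn (timeMap f x₀) (Ioi a) univ := by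
  intro t _
  have hM : 0 < M := pos_of_mul_pos_left ((hpos x₀ hx₀).trans_le (hle x₀ hx₀)) (sub_pos.2 hx₀).le
  have hmono := monotoneOn_timeMap_sub_log hf hpos hle hx₀
  -- `timeMap f x₀ σ` is compared with `M⁻¹ * log ((σ - a) / (x₀ - a))`, which is `± |t|` here
  set σ₁ := a + (x₀ - a) * exp (-(M * |t|))
  set σ₂ := a + (x₀ - a) * exp (M * |t|)
  have hlog : ∀ c, log (a + (x₀ - a) * exp c - a) = log (x₀ - a) + c := fun c => by
    rw [add_sub_cancel_left, log_mul (sub_pos.2 hx₀).ne' (exp_pos c).ne', log_exp]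
  have hσ₁ : a < σ₁ := lt_add_of_pos_right a (mul_pos (sub_pos.2 hx₀) (exp_pos _))
  have hσ₂ : a < σ₂ := lt_add_of_pos_right a (mul_pos (sub_pos.2 hx₀) (exp_pos _))
  have hσ₁x₀ : σ₁ ≤ x₀ := by
    have := exp_le_one_iff.2 (neg_nonpos.2 (mul_nonneg hM.le (abs_nonneg t)))
    nlinarith [sub_pos.2 hx₀]
  have hx₀σ₂ : x₀ ≤ σ₂ := by
    have := one_le_exp (mul_nonneg hM.le (abs_nonneg t))
    nlinarith [sub_pos.2 hx₀]
  have hx₀_zero : timeMap f x₀ x₀ = 0 := intervalIntegral.integral_same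
  have h₁ := hmono hσ₁ hx₀ hσ₁x₀
  have h₂ := hmono hx₀ hσ₂ hx₀σ₂
  simp only [hx₀_zero, hlog, σ₁, σ₂] at h₁ h₂
  have hinv : M⁻¹ * (M * |t|) = |t| := by field_simp
  have hlow : timeMap f x₀ σ₁ ≤ t := by nlinarith [neg_abs_le t]
  have hhigh : t ≤ timeMap f x₀ σ₂ := by nlinarith [le_abs_self t]
  obtain ⟨σ, hσ, rfl⟩ := intermediate_value_Icc (hσ₁x₀.trans hx₀σ₂)
    ((continuousOn_timeMap hf hpos hx₀).mono fun r hr => hσ₁.trans_le hr.1) ⟨hlow, hhigh⟩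
  exact ⟨σ, hσ₁.trans_le hσ.1, rfl⟩

theorem exists_strictAnti_hasDerivAt_neg_comp (hf : ContinuousOn f (Ioi a))
    (hpos : ∀ x ∈ Ioi a, 0 < f x) (hle : ∀ x ∈ Ioi a, f x ≤ M * (x - a)) (hx₀ : a < x₀) :
    ∃ x : ℝ → ℝ, x 0 = x₀ ∧ StrictAnti x ∧ (∀ t, a < x t) ∧
      ∀ t, HasDerivAt x (-f (x t)) t := by
  have hmono := strictMonoOn_timeMap hf hpos hx₀
  obtain ⟨y, hy_mono, hy_mem, hy_inv, hy_deriv⟩ := hmono.exists_hasDerivAt_inverse isOpen_Ioi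
    (surjOn_timeMap hf hpos hle hx₀) (fun σ hσ => hasDerivAt_timeMap hf hpos hx₀ hσ)
    fun σ hσ => inv_ne_zero (hpos σ hσ).ne'
  refine ⟨fun t => y (-t), ?_, fun t₁ t₂ h => hy_mono (neg_lt_neg h), fun t => hy_mem _,
    fun t => ?_⟩
  · exact hmono.injOn (hy_mem _) hx₀
      (by rw [neg_zero, hy_inv]; exact intervalIntegral.integral_same.symm)
  · have h := (hy_deriv (-t)).comp t (hasDerivAt_neg t)
    rw [inv_inv, mul_neg_one] at h
    exact h

end TimeMap

lemma hasDerivWithinAt_Ici_of_eq_add_integral {y g : ℝ → ℝ} {y₀ : ℝ} (hg : Continuous g)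
    (hy : ∀ t, 0 ≤ t → y t = y₀ + ∫ τ in (0:ℝ)..t, g τ) {t : ℝ} (ht : 0 ≤ t) :
    HasDerivWithinAt y (g t) (Ici t) t :=
  (((hg.integral_hasStrictDerivAt 0 t).hasDerivAt).const_add y₀).hasDerivWithinAt.congr
    (fun τ hτ => hy τ (ht.trans hτ)) (hy t ht)

lemma eq_add_integral_of_hasDerivAt {y g : ℝ → ℝ} (hg : Continuous g)
    (hy : ∀ t, 0 ≤ t → HasDerivAt y (g t) t) {t : ℝ} (ht : 0 ≤ t) :
    y t = y 0 + ∫ τ in (0:ℝ)..t, g τ := by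
  rw [intervalIntegral.integral_eq_sub_of_hasDerivAt (fun τ hτ => hy τ ?_)
    (hg.intervalIntegrable 0 t)]
  · ring
  · rw [uIcc_of_le ht] at hτ
    exact hτ.1

lemma eq_mul_exp_integral_of_hasDerivWithinAt {y a : ℝ → ℝ} (hy : Continuous y)
    (ha : Continuous a) (hy' : ∀ t, 0 ≤ t → HasDerivWithinAt y (a t * y t) (Ici t) t)
    {t : ℝ} (ht : 0 ≤ t) : y t = y 0 * exp (∫ τ in (0:ℝ)..t, a τ) := by
  set A := fun t => ∫ τ in (0:ℝ)..t, a τ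
  have hA : ∀ t, HasDerivAt A (a t) t := fun t => (ha.integral_hasStrictDerivAt 0 t).hasDerivAt
  have hA_cont : Continuous A := continuous_iff_continuousAt.2 fun t => (hA t).continuousAt
  have hconst := constant_of_has_deriv_right_zero (f := fun τ => y τ * exp (-A τ))
    (hy.mul (continuous_exp.comp hA_cont.neg)).continuousOn
    (fun τ hτ => ((hy' τ hτ.1).mul (hA τ).neg.exp.hasDerivWithinAt).congr_deriv (by ring))
    t ⟨ht, le_rfl⟩
  have hA0 : A 0 = 0 := intervalIntegral.integral_same
  simp only [hA0, neg_zero, exp_zero, mul_one] at hconst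
  rw [← hconst, mul_assoc, ← exp_add, neg_add_cancel, exp_zero, mul_one]

namespace SIR

-- the level set of `s + i - b log s` through `(s₀, i₀)`, solved for `i`
def orbit (b s₀ i₀ σ : ℝ) : ℝ := i₀ + s₀ - σ + b * (log σ - log s₀)

variable {b s₀ i₀ : ℝ}

@[simp] lemma orbit_self : orbit b s₀ i₀ s₀ = i₀ := by simp [orbit]

lemma hasDerivAt_orbit {σ : ℝ} (hσ : σ ≠ 0) : HasDerivAt (orbit b s₀ i₀) (-1 + b / σ) σ := by
  have := ((hasDerivAt_id σ).const_sub (i₀ + s₀)).add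
    (((hasDerivAt_log hσ).sub_const (log s₀)).const_mul b)
  rw [div_eq_mul_inv]
  exact this

lemma continuousOn_orbit : ContinuousOn (orbit b s₀ i₀) (Ioi 0) :=
  fun _ hσ => (hasDerivAt_orbit (ne_of_gt hσ)).continuousAt.continuousWithinAt

-- the tangent line of the concave orbit at `ρ` lies above it
lemma orbit_sub_orbit_le (hb : 0 ≤ b) {σ ρ : ℝ} (hσ : 0 < σ) (hρ : 0 < ρ) :
    orbit b s₀ i₀ σ - orbit b s₀ i₀ ρ ≤ (σ - ρ) * (b / ρ - 1) := by
  have hlog := log_le_sub_one_of_pos (div_pos hσ hρ)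
  rw [log_div hσ.ne' hρ.ne'] at hlog
  have key : b * (log σ - log ρ) ≤ (σ - ρ) * (b / ρ) := by
    calc b * (log σ - log ρ) ≤ b * (σ / ρ - 1) := mul_le_mul_of_nonneg_left hlog hb
      _ = (σ - ρ) * (b / ρ) := by field_simp
  simp only [orbit]
  linarith

lemma orbit_le_orbit_min (hb : 0 < b) {σ : ℝ} (hσ : 0 < σ) (hσs₀ : σ ≤ s₀) :
    orbit b s₀ i₀ σ ≤ orbit b s₀ i₀ (min b s₀) := by
  rcases le_total b s₀ with hbs₀ | hs₀b
  · have := orbit_sub_orbit_le (s₀ := s₀) (i₀ := i₀) hb.le hσ hb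
    rw [div_self hb.ne', sub_self, mul_zero] at this
    rw [min_eq_left hbs₀]
    linarith
  · have hs₀ := hσ.trans_le hσs₀
    have := orbit_sub_orbit_le (s₀ := s₀) (i₀ := i₀) hb.le hσ hs₀
    have hratio : 0 ≤ b / s₀ - 1 := by rw [sub_nonneg, le_div_iff₀ hs₀]; linarith
    rw [min_eq_right hs₀b]
    nlinarith

lemma exists_orbit_eq_zero (hb : 0 < b) (hs₀ : 0 < s₀) (hi₀ : 0 < i₀) :
    ∃ σ ∈ Ioo 0 s₀, orbit b s₀ i₀ σ = 0 := by
  set c := s₀ * exp (-((i₀ + s₀) / b))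
  have hc : 0 < c := by positivity
  have hcs₀ : c < s₀ := mul_lt_of_lt_one_right hs₀ (exp_lt_one_iff.2 (by
    have : 0 < (i₀ + s₀) / b := by positivity
    linarith))
  have horbit_c : orbit b s₀ i₀ c = -c := by
    simp only [orbit, c, log_mul hs₀.ne' (exp_pos _).ne', log_exp]
    field_simp
    ring
  obtain ⟨σ, hσ, hσ0⟩ := intermediate_value_Ioo hcs₀.le
    (continuousOn_orbit.mono fun x hx => hc.trans_le hx.1)
    (show (0 : ℝ) ∈ Ioo (orbit b s₀ i₀ c) (orbit b s₀ i₀ s₀) by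
      rw [horbit_c, orbit_self]; exact ⟨by linarith, hi₀⟩)
  exact ⟨σ, ⟨hc.trans hσ.1, hσ.2⟩, hσ0⟩

lemma orbit_pos_of_orbit_eq_zero (hb : 0 ≤ b) (hi₀ : 0 < i₀) {σ₀ σ : ℝ} (hσ₀ : 0 < σ₀)
    (hzero : orbit b s₀ i₀ σ₀ = 0) (hσ : σ ∈ Ioc σ₀ s₀) : 0 < orbit b s₀ i₀ σ := by
  have hσpos := hσ₀.trans hσ.1
  rcases lt_or_ge σ b with hσb | hbσ
  · have := orbit_sub_orbit_le (s₀ := s₀) (i₀ := i₀) hb hσ₀ hσpos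
    have hratio : 0 < b / σ - 1 := by rw [sub_pos, lt_div_iff₀ hσpos]; linarith
    nlinarith [hσ.1]
  · have := orbit_sub_orbit_le (s₀ := s₀) (i₀ := i₀) hb (hσpos.trans_le hσ.2) hσpos
    have hratio : b / σ - 1 ≤ 0 := by rw [sub_nonpos, div_le_iff₀ hσpos]; linarith
    rw [orbit_self] at this
    nlinarith [hσ.2]

lemma orbit_le_mul_sub (hb : 0 ≤ b) {σ₀ σ : ℝ} (hσ₀ : 0 < σ₀) (hzero : orbit b s₀ i₀ σ₀ = 0)
    (hσ : σ₀ ≤ σ) : orbit b s₀ i₀ σ ≤ b / σ₀ * (σ - σ₀) := by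
  have := orbit_sub_orbit_le (s₀ := s₀) (i₀ := i₀) hb (hσ₀.trans_le hσ) hσ₀
  rw [hzero] at this
  nlinarith

end SIR

namespace SIRSol

variable {β γ s₀ i₀ : ℝ} {s i : ℝ → ℝ}

lemma s_eq_add_integral (hsol : SIRSol β γ (fun _ => 0) s i s₀ i₀) {t : ℝ} (ht : 0 ≤ t) :
    s t = s₀ + ∫ τ in (0:ℝ)..t, -(β * s τ * i τ) := by
  simpa only [sub_zero] using hsol.2.2.1 t ht

lemma i_eq_add_integral (hsol : SIRSol β γ (fun _ => 0) s i s₀ i₀) {t : ℝ} (ht : 0 ≤ t) :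
    i t = i₀ + ∫ τ in (0:ℝ)..t, (β * s τ * i τ - γ * i τ) := by
  simpa only [sub_zero] using hsol.2.2.2 t ht

lemma s_zero (hsol : SIRSol β γ (fun _ => 0) s i s₀ i₀) : s 0 = s₀ := by
  simpa using hsol.s_eq_add_integral le_rfl

lemma i_zero (hsol : SIRSol β γ (fun _ => 0) s i s₀ i₀) : i 0 = i₀ := by
  simpa using hsol.i_eq_add_integral le_rfl

lemma hasDerivWithinAt_s (hsol : SIRSol β γ (fun _ => 0) s i s₀ i₀) {t : ℝ} (ht : 0 ≤ t) :
    HasDerivWithinAt s (-(β * s t * i t)) (Ici t) t :=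
  hasDerivWithinAt_Ici_of_eq_add_integral (by have := hsol.1; have := hsol.2.1; fun_prop)
    (fun _ => hsol.s_eq_add_integral) ht

lemma hasDerivWithinAt_i (hsol : SIRSol β γ (fun _ => 0) s i s₀ i₀) {t : ℝ} (ht : 0 ≤ t) :
    HasDerivWithinAt i (β * s t * i t - γ * i t) (Ici t) t :=
  hasDerivWithinAt_Ici_of_eq_add_integral (by have := hsol.1; have := hsol.2.1; fun_prop)
    (fun _ => hsol.i_eq_add_integral) ht

lemma s_eq_mul_exp (hsol : SIRSol β γ (fun _ => 0) s i s₀ i₀) {t : ℝ} (ht : 0 ≤ t) :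
    s t = s₀ * exp (∫ τ in (0:ℝ)..t, -(β * i τ)) := by
  rw [← hsol.s_zero]
  exact eq_mul_exp_integral_of_hasDerivWithinAt hsol.1 (by have := hsol.2.1; fun_prop)
    (fun τ hτ => (hsol.hasDerivWithinAt_s hτ).congr_deriv (by ring)) ht

lemma i_eq_mul_exp (hsol : SIRSol β γ (fun _ => 0) s i s₀ i₀) {t : ℝ} (ht : 0 ≤ t) :
    i t = i₀ * exp (∫ τ in (0:ℝ)..t, (β * s τ - γ)) := by
  rw [← hsol.i_zero]
  exact eq_mul_exp_integral_of_hasDerivWithinAt hsol.2.1 (by have := hsol.1; fun_prop)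
    (fun τ hτ => (hsol.hasDerivWithinAt_i hτ).congr_deriv (by ring)) ht

lemma s_pos (hsol : SIRSol β γ (fun _ => 0) s i s₀ i₀) (hs₀ : 0 < s₀) {t : ℝ} (ht : 0 ≤ t) :
    0 < s t := by
  rw [hsol.s_eq_mul_exp ht]
  positivity

lemma eq_orbit (hsol : SIRSol β γ (fun _ => 0) s i s₀ i₀) (hβ : β ≠ 0) (hs₀ : 0 < s₀)
    {t : ℝ} (ht : 0 ≤ t) : i t = SIR.orbit (γ / β) s₀ i₀ (s t) := by
  have hconst := constant_of_has_deriv_right_zero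
    (f := fun τ => s τ + i τ - γ / β * log (s τ))
    ((hsol.1.add hsol.2.1).continuousOn.sub (continuousOn_const.mul
      (hsol.1.continuousOn.log fun τ hτ => (hsol.s_pos hs₀ hτ.1).ne')))
    (fun τ hτ => (((hsol.hasDerivWithinAt_s hτ.1).add (hsol.hasDerivWithinAt_i hτ.1)).sub
      (((hsol.hasDerivWithinAt_s hτ.1).log (hsol.s_pos hs₀ hτ.1).ne').const_mul _)).congr_deriv
      (by field_simp [(hsol.s_pos hs₀ hτ.1).ne']; ring))
    t ⟨ht, le_rfl⟩
  simp only [hsol.s_zero, hsol.i_zero] at hconst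
  simp only [SIR.orbit]
  linarith

lemma exists_le_div (hsol : SIRSol β γ (fun _ => 0) s i s₀ i₀) (hβ : 0 < β) (hγ : 0 < γ)
    (hi₀ : 0 < i₀) : ∃ t, 0 ≤ t ∧ s t ≤ γ / β := by
  by_contra! hgt
  have hi_ge : ∀ t, 0 ≤ t → i₀ ≤ i t := fun t ht => by
    rw [hsol.i_eq_mul_exp ht]
    refine le_mul_of_one_le_right hi₀.le (one_le_exp (intervalIntegral.integral_nonneg ht
      fun τ hτ => ?_))
    have := (div_lt_iff₀ hβ).1 (hgt τ hτ.1)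
    linarith
  have hs_le : ∀ t, 0 ≤ t → s t ≤ s₀ - γ * i₀ * t := fun t ht => by
    have hint : ∫ τ in (0:ℝ)..t, -(β * s τ * i τ) ≤ ∫ τ in (0:ℝ)..t, -(γ * i₀) := by
      refine intervalIntegral.integral_mono_on ht (Continuous.intervalIntegrable
        (by have := hsol.1; have := hsol.2.1; fun_prop) _ _) intervalIntegrable_const
        fun τ hτ => neg_le_neg ?_
      have hs := (div_lt_iff₀ hβ).1 (hgt τ hτ.1)
      nlinarith [hi_ge τ hτ.1]
    rw [intervalIntegral.integral_const, smul_eq_mul] at hint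
    rw [hsol.s_eq_add_integral ht]
    linarith
  have hs₀ : 0 < s₀ := hsol.s_zero ▸ (div_pos hγ hβ).trans (hgt 0 le_rfl)
  have hT : 0 ≤ s₀ / (γ * i₀) := by positivity
  have := hs_le _ hT
  rw [mul_div_cancel₀ _ (by positivity)] at this
  linarith [hgt _ hT, div_pos hγ hβ]

lemma exists_eq_min (hsol : SIRSol β γ (fun _ => 0) s i s₀ i₀) (hβ : 0 < β) (hγ : 0 < γ)
    (hi₀ : 0 < i₀) : ∃ t, 0 ≤ t ∧ s t = min (γ / β) s₀ := by
  rcases le_total s₀ (γ / β) with hs₀ | hs₀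
  · exact ⟨0, le_rfl, by rw [min_eq_right hs₀, hsol.s_zero]⟩
  obtain ⟨t, ht, hst⟩ := hsol.exists_le_div hβ hγ hi₀
  obtain ⟨τ, hτ, hsτ⟩ := intermediate_value_Icc' ht hsol.1.continuousOn
    ⟨hst, hsol.s_zero ▸ hs₀⟩
  exact ⟨τ, hτ.1, by rw [hsτ, min_eq_left hs₀]⟩

lemma of_hasDerivAt (hs : Continuous s) (hi : Continuous i)
    (hs' : ∀ t, 0 ≤ t → HasDerivAt s (-(β * s t * i t)) t)
    (hi' : ∀ t, 0 ≤ t → HasDerivAt i (β * s t * i t - γ * i t) t) :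
    SIRSol β γ (fun _ => 0) s i (s 0) (i 0) := by
  refine ⟨hs, hi, fun t ht => ?_, fun t ht => ?_⟩ <;> simp only [sub_zero]
  · exact eq_add_integral_of_hasDerivAt (by fun_prop) hs' ht
  · exact eq_add_integral_of_hasDerivAt (by fun_prop) hi' ht

end SIRSol

namespace SIR

lemma exists_hasDerivAt_eq_neg_mul_orbit {β b s₀ i₀ : ℝ} (hβ : 0 < β) (hb : 0 < b)
    (hs₀ : 0 < s₀) (hi₀ : 0 < i₀) : ∃ x : ℝ → ℝ, Continuous x ∧ x 0 = s₀ ∧ (∀ t, 0 < x t) ∧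
      (∀ t, 0 ≤ t → x t ≤ s₀) ∧
      ∀ t, 0 ≤ t → HasDerivAt x (-(β * x t * orbit b s₀ i₀ (x t))) t := by
  obtain ⟨σ₀, hσ₀, hzero⟩ := exists_orbit_eq_zero hb hs₀ hi₀
  -- the right-hand side, frozen beyond `s₀` to be positive on `(σ₀, ∞)`
  set f := fun σ => β * min σ s₀ * orbit b s₀ i₀ (min σ s₀)
  have hmin : ∀ σ ∈ Ioi σ₀, min σ s₀ ∈ Ioc σ₀ s₀ := fun σ hσ => ⟨lt_min hσ hσ₀.2, min_le_right _ _⟩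
  have hf : ContinuousOn f (Ioi σ₀) :=
    (continuousOn_const.mul (continuous_id.min continuous_const).continuousOn).mul
      (continuousOn_orbit.comp (continuous_id.min continuous_const).continuousOn
        fun σ hσ => hσ₀.1.trans (hmin σ hσ).1)
  have hpos : ∀ σ ∈ Ioi σ₀, 0 < f σ := fun σ hσ =>
    mul_pos (mul_pos hβ (hσ₀.1.trans (hmin σ hσ).1))
      (orbit_pos_of_orbit_eq_zero hb.le hi₀ hσ₀.1 hzero (hmin σ hσ))
  have hle : ∀ σ ∈ Ioi σ₀, f σ ≤ β * s₀ * (b / σ₀) * (σ - σ₀) := fun σ hσ => by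
    have hm := hmin σ hσ
    have hF_pos := orbit_pos_of_orbit_eq_zero hb.le hi₀ hσ₀.1 hzero hm
    have hσ₀_pos := hσ₀.1
    calc f σ ≤ β * s₀ * (b / σ₀ * (min σ s₀ - σ₀)) :=
          mul_le_mul (mul_le_mul_of_nonneg_left hm.2 hβ.le)
            (orbit_le_mul_sub hb.le hσ₀.1 hzero hm.1.le) hF_pos.le (by positivity)
      _ ≤ β * s₀ * (b / σ₀ * (σ - σ₀)) := by gcongr; exact min_le_left _ _
      _ = β * s₀ * (b / σ₀) * (σ - σ₀) := by ring
  obtain ⟨x, hx0, hx_anti, hx_gt, hx_deriv⟩ :=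
    exists_strictAnti_hasDerivAt_neg_comp hf hpos hle hσ₀.2
  have hx_le : ∀ t, 0 ≤ t → x t ≤ s₀ := fun t ht => hx0 ▸ hx_anti.antitone ht
  refine ⟨x, continuous_iff_continuousAt.2 fun t => (hx_deriv t).continuousAt, hx0,
    fun t => hσ₀.1.trans (hx_gt t), hx_le, fun t ht => ?_⟩
  simpa only [f, min_eq_left (hx_le t ht)] using hx_deriv t

theorem exists_sirSol_eq_orbit {β γ s₀ i₀ : ℝ} (hβ : 0 < β) (hγ : 0 < γ) (hs₀ : 0 < s₀)
    (hi₀ : 0 < i₀) : ∃ s i : ℝ → ℝ, SIRSol β γ (fun _ => 0) s i s₀ i₀ ∧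
      ∀ t, 0 ≤ t → 0 < s t ∧ s t ≤ s₀ ∧ i t = orbit (γ / β) s₀ i₀ (s t) := by
  set b := γ / β
  have hbβ : b * β = γ := div_mul_cancel₀ γ hβ.ne'
  obtain ⟨x, hx_cont, hx0, hx_pos, hx_le, hs'⟩ :=
    exists_hasDerivAt_eq_neg_mul_orbit (i₀ := i₀) hβ (div_pos hγ hβ) hs₀ hi₀
  have hi' : ∀ t, 0 ≤ t → HasDerivAt (fun t => orbit b s₀ i₀ (x t))
      (β * x t * orbit b s₀ i₀ (x t) - γ * orbit b s₀ i₀ (x t)) t := fun t ht =>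
    ((hasDerivAt_orbit (hx_pos t).ne').comp t (hs' t ht)).congr_deriv
      (by rw [← hbβ]; field_simp [(hx_pos t).ne']; ring)
  have hsol := SIRSol.of_hasDerivAt (i := fun t => orbit b s₀ i₀ (x t)) hx_cont
    (continuousOn_orbit.comp_continuous hx_cont hx_pos) hs' hi'
  simp only [hx0, orbit_self] at hsol
  exact ⟨x, _, hsol, fun t ht => ⟨hx_pos t, hx_le t ht, rfl⟩⟩

lemma le_phi0_iff {β γ iM s₀ i₀ : ℝ} :
    i₀ ≤ Phi0 β γ iM s₀ ↔ orbit (γ / β) s₀ i₀ (min (γ / β) s₀) ≤ iM := by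
  unfold Phi0
  split_ifs with h
  · rw [min_eq_right h.le, orbit_self]
  · rw [min_eq_left (not_lt.1 h)]
    simp only [orbit]
    constructor <;> intro <;> linarith

end SIR

theorem statement8_general (β γ iM : ℝ) (hβ : 0 < β) (hγ : 0 < γ) :
    SafeZone β γ iM
      = {p : ℝ × ℝ | p ∈ Triangle ∧ 0 < p.2 ∧ p.2 ≤ Phi0 β γ iM p.1} := by
  ext ⟨s₀, i₀⟩
  constructor
  · rintro ⟨hT, s, i, hsol, hadm⟩
    obtain ⟨t, ht, hst⟩ := hsol.exists_eq_min hβ hγ hT.2.2.1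
    refine ⟨hT, hT.2.2.1, SIR.le_phi0_iff.2 ?_⟩
    rw [← hst, ← hsol.eq_orbit hβ.ne' hT.1 ht]
    exact hadm t ht
  · rintro ⟨hT, hi₀, hle⟩
    obtain ⟨s, i, hsol, hs⟩ := SIR.exists_sirSol_eq_orbit hβ hγ hT.1 hi₀
    refine ⟨hT, s, i, hsol, fun t ht => ?_⟩
    obtain ⟨hs_pos, hs_le, hi_eq⟩ := hs t ht
    rw [hi_eq]
    exact (SIR.orbit_le_orbit_min (div_pos hγ hβ) hs_pos hs_le).trans (SIR.le_phi0_iff.1 hle)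

/-- Characterization of the safe zone: `A = {(s,i) ∈ T : 0 < i ≤ Φ₀(s)}`. -/
theorem statement8 (β γ umax iM : ℝ) (hβ : 0 < β) (hγ : 0 < γ)
    (humax : 0 < umax) (humaxβ : umax < β) (hiM : iM ∈ Set.Ioo (0:ℝ) 1) :
    SafeZone β γ iM
      = {p : ℝ × ℝ | p ∈ Triangle ∧ 0 < p.2 ∧ p.2 ≤ Phi0 β γ iM p.1} :=
  statement8_general β γ iM hβ hγ
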